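/- arXiv:0705.2439 — 2 statements merged into one kernel-verified Lean document; each statement's English description precedes it below -/
import Mathlib

section
/- Let G be a complete graph on n ≥ 3 vertices with distinct positive edge weights, let v be a leaf of the minimum spanning tree MST(G), and let u be the unique neighbor of v in MST(G). Then the minimum spanning tree of the induced subgraph G[V∖{v}] equals MST(G) with the edge {u, v} removed, i.e., MST(G[V∖{v}]) = MST(G) ∖ {{u, v}}. -/
/-- `IsSpanningTreeOn S T` : `T` is the edge set of a spanning tree of the complete
graph on the vertex set `S`: all edges of `T` are non-loop edges with both endpoints
in `S`, all vertices of `S` are pairwise connected using edges of `T`, and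
`|T| = |S| - 1`. -/
def IsSpanningTreeOn {V : Type*} [Fintype V] [DecidableEq V]
    (S : Finset V) (T : Finset (Sym2 V)) : Prop :=
  (∀ e ∈ T, ¬ e.IsDiag ∧ ∀ v ∈ e, v ∈ S) ∧
  (∀ u ∈ S, ∀ v ∈ S, (SimpleGraph.fromEdgeSet (↑T : Set (Sym2 V))).Reachable u v) ∧
  T.card + 1 = S.card

/-- The edge set of the (unique, since weights are injective) minimum spanning tree of
the complete graph on the vertex set `S` with edge weights `w`: the set of edges
belonging to some minimum-weight spanning tree on `S`. -/
def mstEdges {V : Type*} [Fintype V] [DecidableEq V] (w : Sym2 V → ℝ) (S : Finset V) :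
    Set (Sym2 V) :=
  {e | ∃ T : Finset (Sym2 V), IsSpanningTreeOn S T ∧
        (∀ T' : Finset (Sym2 V), IsSpanningTreeOn S T' → T.sum w ≤ T'.sum w) ∧ e ∈ T}

/-- `Mk w k` = `M_k(G)`: the union of the edge sets of the minimum spanning trees of all
induced subgraphs of the complete graph on `V` obtained by deleting `k - 1` vertices. -/
def Mk {V : Type*} [Fintype V] [DecidableEq V] (w : Sym2 V → ℝ) (k : ℕ) : Set (Sym2 V) :=
  {e | ∃ X : Finset V, X.card = k - 1 ∧ e ∈ mstEdges w (Finset.univ \ X)}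

/-- Two walks from `u` to `v` are internally disjoint if the only vertices they share
are `u` and `v`. -/
def InternallyDisjoint {V : Type*} {G : SimpleGraph V} {u v : V}
    (p q : G.Walk u v) : Prop :=
  ∀ x, x ∈ p.support → x ∈ q.support → x = u ∨ x = v

/-- `HasDisjointPaths G u v k` : `G` contains (at least) `k` pairwise internally
vertex-disjoint paths between `u` and `v`. -/
def HasDisjointPaths {V : Type*} (G : SimpleGraph V) (u v : V) (k : ℕ) : Prop :=
  ∃ P : Fin k → G.Walk u v, (∀ i, (P i).IsPath) ∧
    Pairwise fun i j => InternallyDisjoint (P i) (P j)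

/-- `IsConstructionOrder k G l` : the list `l` enumerates the edges of `G` without
repetition, and each edge joins two vertices between which the graph formed by the
previous edges has at most `k - 1` internally vertex-disjoint paths. -/
def IsConstructionOrder {V : Type*} [DecidableEq V] (k : ℕ) (G : SimpleGraph V)
    (l : List (Sym2 V)) : Prop :=
  l.Nodup ∧ (↑l.toFinset : Set (Sym2 V)) = G.edgeSet ∧
  ∀ (i : ℕ) (h : i < l.length) (u v : V), l.get ⟨i, h⟩ = s(u, v) →
    ¬ HasDisjointPaths (SimpleGraph.fromEdgeSet (↑(l.take i).toFinset)) u v k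

/-- A graph is `k`-constructible if it admits a `k`-construction order of its edges. -/
def IsKConstructible {V : Type*} [DecidableEq V] (k : ℕ) (G : SimpleGraph V) : Prop :=
  ∃ l : List (Sym2 V), IsConstructionOrder k G l

/-- A graph is `k`-(vertex-)connected: it has more than `k` vertices and deleting any
fewer than `k` vertices leaves a connected graph. -/
def IsKConnectedGraph {V : Type*} [Fintype V] [DecidableEq V]
    (k : ℕ) (G : SimpleGraph V) : Prop :=
  k < Fintype.card V ∧
  ∀ S : Finset V, S.card < k → (G.induce ((↑S : Set V)ᶜ)).Connected

/-- A graph is `k`-minimal if it is `k`-connected and deleting any single edge destroys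
`k`-connectivity. -/
def IsKMinimal {V : Type*} [Fintype V] [DecidableEq V]
    (k : ℕ) (G : SimpleGraph V) : Prop :=
  IsKConnectedGraph k G ∧ ∀ e ∈ G.edgeSet, ¬ IsKConnectedGraph k (G.deleteEdges {e})

/-!
Deleting a leaf `v` of a spanning tree together with its edge `s(u, v)` leaves a spanning tree of
the remaining vertices, and adding `s(u, v)` to any spanning tree of `V \ {v}` gives a spanning tree
of `V`. Both operations shift the total weight by exactly `w s(u, v)`, so they exchange minimum
spanning trees of `V` and of `V \ {v}`.
-/

open SimpleGraph

section

variable {V : Type*}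

lemma exists_mem_edge_of_reachable {T : Finset (Sym2 V)} {u v : V}
    (h : (fromEdgeSet (T : Set (Sym2 V))).Reachable v u) (hne : v ≠ u) :
    ∃ e ∈ T, v ∈ e := by
  obtain ⟨p⟩ := h
  cases p with
  | nil => exact absurd rfl hne
  | cons hadj _ => exact ⟨_, ((fromEdgeSet_adj _).mp hadj).1, Sym2.mem_mk_left _ _⟩

/-- In a trail, an inner vertex lies on an even, positive number of edges; a leaf of `T` lies
on at most one edge of a trail in `T`, so it is never an inner vertex. -/
lemma reachable_erase_of_forall_mem_eq [DecidableEq V] {T : Finset (Sym2 V)} {u v x y : V}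
    (hleaf : ∀ e ∈ T, v ∈ e → e = s(u, v)) (hx : x ≠ v) (hy : y ≠ v)
    (h : (fromEdgeSet (T : Set (Sym2 V))).Reachable x y) :
    (fromEdgeSet ((T.erase s(u, v) : Finset (Sym2 V)) : Set (Sym2 V))).Reachable x y := by
  obtain ⟨p, hp⟩ := h.exists_isPath
  have hedges : ∀ e ∈ p.edges, e ∈ T ∧ ¬ e.IsDiag := fun e he => by
    simpa using p.edges_subset_edgeSet he
  have heven := (hp.isTrail.even_countP_edges_iff v).mpr fun _ => ⟨hx.symm, hy.symm⟩
  have hcount : p.edges.countP (fun e => v ∈ e) = p.edges.count s(u, v) :=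
    List.countP_congr fun e he => by
      simpa using ⟨hleaf e (hedges e he).1, fun h => h ▸ Sym2.mem_mk_right u v⟩
  have hle := List.nodup_iff_count_le_one.mp hp.isTrail.edges_nodup s(u, v)
  have hzero : p.edges.countP (fun e => v ∈ e) = 0 := by
    obtain ⟨k, hk⟩ := heven
    omega
  refine ⟨p.transfer _ fun e he => ?_⟩
  have hv : v ∉ e := by simpa using List.countP_eq_zero.mp hzero e he
  simpa [hedges e he] using fun heq : e = s(u, v) => hv (heq ▸ Sym2.mem_mk_right u v)

lemma Set.eq_of_ncard_sep_eq_one {α : Type*} {M : Set α} {p : α → Prop} {a b : α}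
    (h : {x ∈ M | p x}.ncard = 1) (ha : a ∈ M) (hpa : p a) (hb : b ∈ M) (hpb : p b) : b = a := by
  obtain ⟨c, hc⟩ := Set.ncard_eq_one.mp h
  have hac : a ∈ ({c} : Set α) := hc ▸ ⟨ha, hpa⟩
  have hbc : b ∈ ({c} : Set α) := hc ▸ ⟨hb, hpb⟩
  exact hbc.trans hac.symm

section SpanningTree

variable [Fintype V] [DecidableEq V] {S : Finset V} {T : Finset (Sym2 V)} {u v : V}

namespace IsSpanningTreeOn

lemma mem_of_mem_of_mem (hT : IsSpanningTreeOn S T) {e : Sym2 V} (he : e ∈ T) {x : V}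
    (hx : x ∈ e) : x ∈ S :=
  (hT.1 e he).2 x hx

lemma ne_of_mk_mem (hT : IsSpanningTreeOn S T) (huv : s(u, v) ∈ T) : u ≠ v :=
  fun h => (hT.1 _ huv).1 (Sym2.mk_isDiag_iff.mpr h)

lemma mk_notMem_of_sdiff (hT : IsSpanningTreeOn (S \ {v}) T) : s(u, v) ∉ T := fun h => by
  simpa using hT.mem_of_mem_of_mem h (Sym2.mem_mk_right u v)

lemma mk_mem_of_forall_mem_eq (hT : IsSpanningTreeOn S T) (hu : u ∈ S) (hv : v ∈ S)
    (huv : u ≠ v) (hleaf : ∀ e ∈ T, v ∈ e → e = s(u, v)) : s(u, v) ∈ T := by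
  obtain ⟨e, he, hve⟩ := exists_mem_edge_of_reachable (hT.2.1 v hv u hu) huv.symm
  exact hleaf e he hve ▸ he

lemma erase_leaf (hT : IsSpanningTreeOn S T) (huv : s(u, v) ∈ T)
    (hleaf : ∀ e ∈ T, v ∈ e → e = s(u, v)) : IsSpanningTreeOn (S \ {v}) (T.erase s(u, v)) := by
  have hv : v ∈ S := hT.mem_of_mem_of_mem huv (Sym2.mem_mk_right u v)
  refine ⟨fun e he => ?_, fun x hx y hy => ?_, ?_⟩
  · obtain ⟨hne, he⟩ := Finset.mem_erase.mp he
    refine ⟨(hT.1 e he).1, fun x hx => Finset.mem_sdiff.mpr ⟨hT.mem_of_mem_of_mem he hx, ?_⟩⟩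
    intro hxv
    exact hne (hleaf e he (Finset.mem_singleton.mp hxv ▸ hx))
  · simp only [Finset.mem_sdiff, Finset.mem_singleton] at hx hy
    exact reachable_erase_of_forall_mem_eq hleaf hx.2 hy.2 (hT.2.1 x hx.1 y hy.1)
  · have hpos := Finset.card_pos.mpr ⟨_, huv⟩
    rw [Finset.card_erase_of_mem huv, Finset.sdiff_singleton_eq_erase, Finset.card_erase_of_mem hv,
      ← hT.2.2]
    omega

lemma insert_leaf (hT : IsSpanningTreeOn (S \ {v}) T) (hu : u ∈ S) (hv : v ∈ S) (huv : u ≠ v) :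
    IsSpanningTreeOn S (insert s(u, v) T) := by
  have hmono : fromEdgeSet (T : Set (Sym2 V)) ≤ fromEdgeSet (insert s(u, v) T : Finset _) :=
    fromEdgeSet_mono (by simp)
  have hreach : ∀ x ∈ S, (fromEdgeSet (insert s(u, v) T : Finset _)).Reachable x u := by
    intro x hx
    by_cases hxv : x = v
    · subst hxv
      exact Adj.reachable (by simpa [Sym2.eq_swap] using huv.symm)
    · exact (hT.2.1 x (by simp [hx, hxv]) u (by simp [hu, huv])).mono hmono
  refine ⟨fun e he => ?_, fun x hx y hy => (hreach x hx).trans (hreach y hy).symm, ?_⟩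
  · rcases Finset.mem_insert.mp he with rfl | he
    · exact ⟨fun h => huv (Sym2.mk_isDiag_iff.mp h), by simp [hu, hv]⟩
    · exact ⟨(hT.1 e he).1, fun x hx => (Finset.mem_sdiff.mp (hT.mem_of_mem_of_mem he hx)).1⟩
  · rw [Finset.card_insert_of_notMem hT.mk_notMem_of_sdiff, hT.2.2, Finset.sdiff_singleton_eq_erase,
      Finset.card_erase_add_one hv]

end IsSpanningTreeOn

end SpanningTree

def IsMinSpanningTreeOn [Fintype V] [DecidableEq V] (w : Sym2 V → ℝ) (S : Finset V)
    (T : Finset (Sym2 V)) : Prop :=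
  IsSpanningTreeOn S T ∧ ∀ T' : Finset (Sym2 V), IsSpanningTreeOn S T' → T.sum w ≤ T'.sum w

lemma mem_mstEdges_iff [Fintype V] [DecidableEq V] {w : Sym2 V → ℝ} {S : Finset V}
    {e : Sym2 V} : e ∈ mstEdges w S ↔ ∃ T, IsMinSpanningTreeOn w S T ∧ e ∈ T := by
  simp only [mstEdges, IsMinSpanningTreeOn, Set.mem_ofPred_eq, and_assoc]

namespace IsMinSpanningTreeOn

variable [Fintype V] [DecidableEq V] {w : Sym2 V → ℝ} {S : Finset V} {T : Finset (Sym2 V)}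
  {u v : V}

lemma erase_leaf (hT : IsMinSpanningTreeOn w S T) (huv : s(u, v) ∈ T)
    (hleaf : ∀ e ∈ T, v ∈ e → e = s(u, v)) :
    IsMinSpanningTreeOn w (S \ {v}) (T.erase s(u, v)) := by
  refine ⟨hT.1.erase_leaf huv hleaf, fun T' hT' => ?_⟩
  have hu : u ∈ S := hT.1.mem_of_mem_of_mem huv (Sym2.mem_mk_left u v)
  have hv : v ∈ S := hT.1.mem_of_mem_of_mem huv (Sym2.mem_mk_right u v)
  have hmin := hT.2 _ (hT'.insert_leaf hu hv (hT.1.ne_of_mk_mem huv))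
  rw [Finset.sum_insert hT'.mk_notMem_of_sdiff, ← Finset.add_sum_erase T w huv] at hmin
  linarith

lemma insert_leaf {T₀ : Finset (Sym2 V)} (hT₀ : IsMinSpanningTreeOn w S T₀)
    (huv : s(u, v) ∈ T₀) (hleaf : ∀ e ∈ T₀, v ∈ e → e = s(u, v))
    (hT : IsMinSpanningTreeOn w (S \ {v}) T) : IsMinSpanningTreeOn w S (insert s(u, v) T) := by
  have hu : u ∈ S := hT₀.1.mem_of_mem_of_mem huv (Sym2.mem_mk_left u v)
  have hv : v ∈ S := hT₀.1.mem_of_mem_of_mem huv (Sym2.mem_mk_right u v)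
  refine ⟨hT.1.insert_leaf hu hv (hT₀.1.ne_of_mk_mem huv), fun T' hT' => ?_⟩
  calc (insert s(u, v) T).sum w = w s(u, v) + T.sum w := Finset.sum_insert hT.1.mk_notMem_of_sdiff
    _ ≤ w s(u, v) + (T₀.erase s(u, v)).sum w :=
        add_le_add_right (hT.2 _ (hT₀.1.erase_leaf huv hleaf)) _
    _ = T₀.sum w := Finset.add_sum_erase T₀ w huv
    _ ≤ T'.sum w := hT₀.2 T' hT'

end IsMinSpanningTreeOn

end

theorem stmt_4_general {V : Type*} [Fintype V] [DecidableEq V] (w : Sym2 V → ℝ)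
    (u v : V)
    (hleaf : {e ∈ mstEdges w Finset.univ | v ∈ e}.ncard = 1)
    (hedge : s(u, v) ∈ mstEdges w Finset.univ) :
    mstEdges w (Finset.univ \ {v}) = mstEdges w Finset.univ \ {s(u, v)} := by
  have hleafT : ∀ T, IsMinSpanningTreeOn w Finset.univ T → ∀ e ∈ T, v ∈ e → e = s(u, v) :=
    fun T hT e he hve => Set.eq_of_ncard_sep_eq_one hleaf hedge (Sym2.mem_mk_right u v)
      (mem_mstEdges_iff.mpr ⟨T, hT, he⟩) hve
  obtain ⟨T₀, hT₀, huvT₀⟩ := mem_mstEdges_iff.mp hedge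
  have huv : u ≠ v := hT₀.1.ne_of_mk_mem huvT₀
  ext e
  simp only [mem_mstEdges_iff, Set.mem_sdiff, Set.mem_singleton_iff]
  constructor
  · rintro ⟨T, hT, he⟩
    exact ⟨⟨_, hT₀.insert_leaf huvT₀ (hleafT T₀ hT₀) hT, Finset.mem_insert_of_mem he⟩,
      fun h => hT.1.mk_notMem_of_sdiff (h ▸ he)⟩
  · rintro ⟨⟨T, hT, he⟩, hne⟩
    have huvT := hT.1.mk_mem_of_forall_mem_eq (Finset.mem_univ u) (Finset.mem_univ v) huv
      (hleafT T hT)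
    exact ⟨_, hT.erase_leaf huvT (hleafT T hT), Finset.mem_erase.mpr ⟨hne, he⟩⟩

/-- if `v` is a leaf of `MST(G)` (exactly one MST edge contains `v`)
with unique neighbor `u` (so `{u,v} ∈ MST(G)`), and `n ≥ 3`, then
`MST(G[V ∖ {v}]) = MST(G) ∖ {{u,v}}`. -/
theorem stmt_4 {V : Type*} [Fintype V] [DecidableEq V] (w : Sym2 V → ℝ)
    (hpos : ∀ e : Sym2 V, ¬ e.IsDiag → 0 < w e)
    (hinj : ∀ e f : Sym2 V, ¬ e.IsDiag → ¬ f.IsDiag → w e = w f → e = f)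
    (hn : 3 ≤ Fintype.card V) (u v : V) (huv : u ≠ v)
    (hleaf : {e ∈ mstEdges w Finset.univ | v ∈ e}.ncard = 1)
    (hedge : s(u, v) ∈ mstEdges w Finset.univ) :
    mstEdges w (Finset.univ \ {v}) = mstEdges w Finset.univ \ {s(u, v)} :=
  stmt_4_general w u v hleaf hedge
end

section
/- Let H = (V, E) be a finite simple graph, let k ≥ 1, and let v_1, v_2 ∈ V be two non-adjacent vertices such that the maximum number of internally vertex-disjoint paths between v_1 and v_2 in H is r ≤ k−1. Let F be any set of vertex pairs such that for every {u, w} ∈ F, the vertices u and w are k-connected in H (i.e., H contains k internally vertex-disjoint u–w paths). Then the maximum number of internally vertex-disjoint paths between v_1 and v_2 in the graph (V, E ∪ F) is still r. -/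
namespace SimpleGraph

variable {V : Type*} {G G' : SimpleGraph V} {A A' B S S' T : Set V} {k : ℕ}

def Separates (G : SimpleGraph V) (A B S : Set V) : Prop :=
  ∀ ⦃a b : V⦄, a ∈ A → b ∈ B → ∀ w : G.Walk a b, ∃ s ∈ w.support, s ∈ S

def reachAvoiding (G : SimpleGraph V) (S A : Set V) : Set V :=
  {v | ∃ a ∈ A, ∃ w : G.Walk a v, ∀ x ∈ w.support, x ∉ S}

def HasDisjointWalks (G : SimpleGraph V) (A B : Set V) (k : ℕ) : Prop :=
  ∃ (a b : Fin k → V) (W : ∀ i, G.Walk (a i) (b i)), (∀ i, a i ∈ A) ∧ (∀ i, b i ∈ B) ∧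
    Pairwise fun i j => (W i).support.Disjoint (W j).support

section reachAvoiding

variable {u v : V}

lemma mem_reachAvoiding_of_mem (hv : v ∈ A) (hvS : v ∉ S) : v ∈ G.reachAvoiding S A :=
  ⟨v, hv, .nil, by simpa⟩

lemma notMem_of_mem_reachAvoiding (hv : v ∈ G.reachAvoiding S A) : v ∉ S := by
  obtain ⟨a, -, w, hw⟩ := hv
  exact hw v w.end_mem_support

lemma mem_reachAvoiding_of_adj (hu : u ∈ G.reachAvoiding S A) (huv : G.Adj u v) (hv : v ∉ S) :
    v ∈ G.reachAvoiding S A := by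
  obtain ⟨a, ha, w, hw⟩ := hu
  refine ⟨a, ha, w.concat huv, fun x hx => ?_⟩
  rw [Walk.support_concat, List.mem_append, List.mem_singleton] at hx
  rcases hx with hx | rfl
  exacts [hw x hx, hv]

lemma reachAvoiding_mono (hS : S ⊆ S') (hA : A ⊆ A') :
    G.reachAvoiding S' A ⊆ G.reachAvoiding S A' :=
  fun _ ⟨a, ha, w, hw⟩ => ⟨a, hA ha, w, fun x hx hxS => hw x hx (hS hxS)⟩

lemma reachAvoiding_subset {R : Set V} (hA : ∀ a ∈ A, a ∉ S → a ∈ R)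
    (hR : ∀ ⦃u v⦄, u ∈ R → G.Adj u v → v ∉ S → v ∈ R) : G.reachAvoiding S A ⊆ R := by
  suffices ∀ {u v} (w : G.Walk u v), u ∈ R → (∀ x ∈ w.support, x ∉ S) → v ∈ R from
    fun v ⟨a, ha, w, hw⟩ => this w (hA a ha (hw a w.start_mem_support)) hw
  intro u v w
  induction w with
  | nil => exact fun hu _ => hu
  | cons h p ih =>
    exact fun hu hw => ih (hR hu h (hw _ (by simp))) fun x hx => hw x (by simp [hx])

lemma separates_iff_disjoint_reachAvoiding :
    G.Separates A B S ↔ Disjoint (G.reachAvoiding S A) B := by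
  simp only [Separates, reachAvoiding, Set.disjoint_left, Set.mem_ofPred_eq]
  constructor
  · rintro h v ⟨a, ha, w, hw⟩ hv
    obtain ⟨s, hs, hsS⟩ := h ha hv w
    exact hw s hs hsS
  · intro h a b ha hb w
    by_contra! hw
    exact h ⟨a, ha, w, hw⟩ hb

lemma Separates.symm (h : G.Separates A B S) : G.Separates B A S := fun _ _ hb ha w => by
  simpa using h ha hb w.reverse

lemma Separates.disjoint_reachAvoiding (h : G.Separates A B S) :
    Disjoint (G.reachAvoiding S A) (G.reachAvoiding S B) := by
  rw [Set.disjoint_left]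
  rintro v ⟨a, ha, wa, hwa⟩ ⟨b, hb, wb, hwb⟩
  obtain ⟨s, hs, hsS⟩ := h ha hb (wa.append wb.reverse)
  rw [Walk.mem_support_append_iff, Walk.support_reverse, List.mem_reverse] at hs
  exact hs.elim (hwa s · hsS) (hwb s · hsS)

lemma Separates.of_forall_adj (h : G'.Separates A B S)
    (hG : ∀ ⦃u v⦄, G.Adj u v → u ∉ S → v ∉ S → ∃ p : G'.Walk u v, ∀ x ∈ p.support, x ∉ S) :
    G.Separates A B S := by
  rw [separates_iff_disjoint_reachAvoiding] at h ⊢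
  refine h.mono_left (reachAvoiding_subset (fun a ha haS => mem_reachAvoiding_of_mem ha haS) ?_)
  rintro u v ⟨a, ha, w, hw⟩ huv hv
  obtain ⟨p, hp⟩ := hG huv (hw u w.end_mem_support) hv
  refine ⟨a, ha, w.append p, fun x hx => ?_⟩
  rw [Walk.mem_support_append_iff] at hx
  exact hx.elim (hw x) (hp x)

end reachAvoiding

lemma Walk.exists_walk_to_first_mem (X : Set V) :
    ∀ {a b : V} (w : G.Walk a b), b ∈ X → ∃ t ∈ X, ∃ p : G.Walk a t,
      p.support ⊆ w.support ∧ ∀ v ∈ p.support, v ≠ t → v ∈ G.reachAvoiding X {a} := by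
  intro a b w hb
  induction w with
  | nil => exact ⟨_, hb, .nil, List.Subset.refl _, by simp⟩
  | @cons a c b hac w ih =>
    by_cases ha : a ∈ X
    · exact ⟨a, ha, .nil, by simp, by simp⟩
    obtain ⟨t, ht, p, hpw, hp⟩ := ih hb
    refine ⟨t, ht, .cons hac p, List.cons_subset_cons _ hpw, fun v hv hvt => ?_⟩
    rcases List.mem_cons.mp hv with rfl | hv
    · exact mem_reachAvoiding_of_mem rfl ha
    obtain ⟨_, rfl, q, hq⟩ := hp v hv hvt
    refine ⟨a, rfl, .cons hac q, fun x hx => ?_⟩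
    rcases List.mem_cons.mp hx with rfl | hx
    exacts [ha, hq x hx]

lemma HasDisjointWalks.mono (h : G'.HasDisjointWalks A B k) (hle : G' ≤ G) :
    G.HasDisjointWalks A B k := by
  obtain ⟨a, b, W, ha, hb, hW⟩ := h
  exact ⟨a, b, fun i => (W i).mapLe hle, ha, hb, by simpa [Walk.support_mapLe_eq_support]⟩

lemma HasDisjointWalks.symm (h : G.HasDisjointWalks A B k) : G.HasDisjointWalks B A k := by
  obtain ⟨a, b, W, ha, hb, hW⟩ := h
  exact ⟨b, a, fun i => (W i).reverse, hb, ha, fun i j hij x hi hj => hW hij (by simpa using hi)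
    (by simpa using hj)⟩

lemma HasDisjointWalks.exists_trimmed {X : Set V} (h : G.HasDisjointWalks A X k) :
    ∃ (a t : Fin k → V) (P : ∀ i, G.Walk (a i) (t i)), (∀ i, a i ∈ A) ∧ (∀ i, t i ∈ X) ∧
      (Pairwise fun i j => (P i).support.Disjoint (P j).support) ∧
      ∀ i, ∀ v ∈ (P i).support, v ≠ t i → v ∈ G.reachAvoiding X A := by
  obtain ⟨a, b, W, ha, hb, hW⟩ := h
  choose t ht P hPW hP using fun i => (W i).exists_walk_to_first_mem X (hb i)
  refine ⟨a, t, P, ha, ht, fun i j hij => ?_, fun i v hv hvt => ?_⟩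
  · exact List.disjoint_of_subset_left (hPW i) (List.disjoint_of_subset_right (hPW j) (hW hij))
  · exact reachAvoiding_mono subset_rfl (by simpa using ha i) (hP i v hv hvt)

lemma hasDisjointWalks_bot [Finite V]
    (h : ∀ S : Finset V, (⊥ : SimpleGraph V).Separates A B S → k ≤ S.card) :
    (⊥ : SimpleGraph V).HasDisjointWalks A B k := by
  classical
  let _ := Fintype.ofFinite V
  have hk : k ≤ (A ∩ B).toFinset.card := h _ fun a b ha hb w => by
    cases w with
    | nil => exact ⟨a, by simp, by simpa using ⟨ha, hb⟩⟩
    | cons hadj _ => exact hadj.elim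
  obtain ⟨f⟩ := Function.Embedding.nonempty_of_card_le (α := Fin k) (β := (A ∩ B).toFinset)
    (by rwa [Fintype.card_fin, Fintype.card_coe])
  have hf i : (f i : V) ∈ A ∩ B := by simpa using (f i).2
  exact ⟨fun i => f i, fun i => f i, fun i => .nil, fun i => (hf i).1, fun i => (hf i).2,
    fun i j hij => by simpa using hij.symm⟩

section deleteEdges

variable {x y z z' : V} {e : Sym2 V}

lemma Separates.of_deleteEdges (h : (G.deleteEdges {s(x, y)}).Separates A B S)
    (hx : x ∈ (G.deleteEdges {s(x, y)}).reachAvoiding S A)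
    (hy : y ∈ (G.deleteEdges {s(x, y)}).reachAvoiding S A) : G.Separates A B S := by
  rw [separates_iff_disjoint_reachAvoiding] at h ⊢
  refine h.mono_left (reachAvoiding_subset (fun a ha haS => mem_reachAvoiding_of_mem ha haS) ?_)
  intro u v hu huv hv
  by_cases he : s(u, v) = s(x, y)
  · rcases Sym2.eq_iff.mp he with ⟨-, rfl⟩ | ⟨-, rfl⟩
    exacts [hy, hx]
  · exact mem_reachAvoiding_of_adj hu ((deleteEdges_adj ..).mpr ⟨huv, he⟩) hv

lemma Separates.of_deleteEdges_insert (hS : (G.deleteEdges {e}).Separates A B S)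
    (he : s(z, z') = e) (hz' : z' ∉ (G.deleteEdges {e}).reachAvoiding S A)
    (hT : (G.deleteEdges {e}).Separates A (insert z S) T) : G.Separates A B T := by
  set G' := G.deleteEdges {e}
  set Q := G'.reachAvoiding (T ∪ insert z S) A
  have hQS : Q ⊆ G'.reachAvoiding S A :=
    reachAvoiding_mono (fun v hv => Or.inr (Set.mem_insert_of_mem z hv)) subset_rfl
  have hQT : Q ⊆ G'.reachAvoiding T A := reachAvoiding_mono Set.subset_union_left subset_rfl
  rw [separates_iff_disjoint_reachAvoiding] at hS hT ⊢
  refine hS.mono_left (Set.Subset.trans (reachAvoiding_subset ?_ ?_) hQS)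
  · intro a ha haT
    have haX : a ∉ insert z S := Set.disjoint_left.mp hT (mem_reachAvoiding_of_mem ha haT)
    exact mem_reachAvoiding_of_mem ha fun h => h.elim haT haX
  · intro u v hu huv hvT
    have huX : u ∉ insert z S := fun h => notMem_of_mem_reachAvoiding hu (Or.inr h)
    by_cases huve : s(u, v) = e
    · rw [← he, Sym2.eq_iff] at huve
      rcases huve with ⟨rfl, -⟩ | ⟨rfl, -⟩
      exacts [(huX (Set.mem_insert _ _)).elim, (hz' (hQS hu)).elim]
    have hadj : G'.Adj u v := (deleteEdges_adj ..).mpr ⟨huv, huve⟩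
    by_cases hvX : v ∈ insert z S
    · exact (Set.disjoint_left.mp hT (mem_reachAvoiding_of_adj (hQT hu) hadj hvT) hvX).elim
    · exact mem_reachAvoiding_of_adj hu hadj fun h => h.elim hvT hvX

lemma Separates.exists_orientation (h : (G.deleteEdges {s(x, y)}).Separates A B S)
    (hG : ¬ G.Separates A B S) :
    ∃ z z', s(z, z') = s(x, y) ∧ z' ∉ (G.deleteEdges {s(x, y)}).reachAvoiding S A ∧
      z ∉ (G.deleteEdges {s(x, y)}).reachAvoiding S B := by
  have hd := h.disjoint_reachAvoiding
  by_cases hx : x ∈ (G.deleteEdges {s(x, y)}).reachAvoiding S A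
  · exact ⟨x, y, rfl, fun hy => hG (h.of_deleteEdges hx hy), Set.disjoint_left.mp hd hx⟩
  by_cases hy : y ∈ (G.deleteEdges {s(x, y)}).reachAvoiding S B
  · exact ⟨x, y, rfl, Set.disjoint_right.mp hd hy,
      fun hx' => hG (h.symm.of_deleteEdges hx' hy).symm⟩
  · exact ⟨y, x, Sym2.eq_swap, hx, hy⟩

end deleteEdges

lemma Separates.mem_of_mem_of_mem (h : G.Separates A B S) {z z' t s v : V} (hzz' : z ≠ z')
    (hz : z ∉ G.reachAvoiding S B) (hz' : z' ∉ G.reachAvoiding S A)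
    (ht : t ∈ insert z S) (hs : s ∈ insert z' S)
    (hvt : v ≠ t → v ∈ G.reachAvoiding S A) (hvs : v ≠ s → v ∈ G.reachAvoiding S B) :
    v = t ∧ v = s ∧ v ∈ S := by
  by_cases hvt' : v = t <;> by_cases hvs' : v = s
  · subst hvt' hvs'
    refine ⟨rfl, rfl, ?_⟩
    rcases ht with rfl | ht
    · rcases hs with rfl | hs
      exacts [(hzz' rfl).elim, hs]
    · exact ht
  · subst hvt'
    have hv := hvs hvs'
    rcases ht with rfl | ht
    exacts [(hz hv).elim, (notMem_of_mem_reachAvoiding hv ht).elim]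
  · subst hvs'
    have hv := hvt hvt'
    rcases hs with rfl | hs
    exacts [(hz' hv).elim, (notMem_of_mem_reachAvoiding hv hs).elim]
  · exact (Set.disjoint_left.mp h.disjoint_reachAvoiding (hvt hvt') (hvs hvs')).elim

lemma injective_of_pairwise_disjoint_support {a t : Fin k → V} {P : ∀ i, G.Walk (a i) (t i)}
    (h : Pairwise fun i j => (P i).support.Disjoint (P j).support) : Function.Injective t :=
  fun i j hij => by_contra fun hne =>
    h hne (P i).end_mem_support (by rw [hij]; exact (P j).end_mem_support)

lemma exists_comp_eq_of_injective {X : Finset V} {t f : Fin k → V} (ht : Function.Injective t)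
    (htX : ∀ i, t i ∈ X) (hX : X.card ≤ k) (hf : ∀ j, f j ∈ X) :
    ∃ σ : Fin k → Fin k, ∀ j, t (σ j) = f j := by
  have hsurj := Finset.surjOn_of_injOn_of_card_le t (s := Finset.univ) (t := X)
    (fun i _ => htX i) ht.injOn (by simpa using hX)
  choose σ _ hσ using fun j => hsurj (hf j)
  exact ⟨σ, hσ⟩

lemma Walk.exists_support_subset_of_eq_or_adj {u v : V} (h : u = v ∨ G.Adj u v) :
    ∃ c : G.Walk u v, ∀ x ∈ c.support, x = u ∨ x = v := by
  rcases h with rfl | h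
  · exact ⟨.nil, by simp⟩
  · exact ⟨h.toWalk, by simp⟩

lemma hasDisjointWalks_of_forall_eq_or_adj {a t s b : Fin k → V} (P : ∀ i, G.Walk (a i) (t i))
    (Q : ∀ j, G.Walk (s j) (b j)) (ha : ∀ i, a i ∈ A) (hb : ∀ j, b j ∈ B)
    (hP : Pairwise fun i j => (P i).support.Disjoint (P j).support)
    (hQ : Pairwise fun i j => (Q i).support.Disjoint (Q j).support)
    {σ : Fin k → Fin k} (hσ : Function.Injective σ)
    (hts : ∀ j, t (σ j) = s j ∨ G.Adj (t (σ j)) (s j))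
    (hPQ : ∀ j j', ∀ v ∈ (P (σ j)).support, v ∈ (Q j').support → j = j') :
    G.HasDisjointWalks A B k := by
  choose c hc using fun j => Walk.exists_support_subset_of_eq_or_adj (hts j)
  refine ⟨fun j => a (σ j), b, fun j => (P (σ j)).append ((c j).append (Q j)), fun j => ha _, hb,
    fun j j' hjj' v hv hv' => ?_⟩
  have hsupp : ∀ j, v ∈ ((P (σ j)).append ((c j).append (Q j))).support →
      v ∈ (P (σ j)).support ∨ v ∈ (Q j).support := by
    intro j hv
    simp only [Walk.mem_support_append_iff] at hv
    rcases hv with hv | hv | hv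
    · exact Or.inl hv
    · rcases hc j v hv with rfl | rfl
      exacts [Or.inl (P _).end_mem_support, Or.inr (Q _).start_mem_support]
    · exact Or.inr hv
  rcases hsupp j hv with hv | hv <;> rcases hsupp j' hv' with hv' | hv'
  · exact hP (hσ.ne hjj') hv hv'
  · exact hjj' (hPQ j j' v hv hv')
  · exact hjj' (hPQ j' j v hv' hv).symm
  · exact hQ hjj' hv hv'

lemma HasDisjointWalks.join [DecidableEq V] {S : Finset V} {z z' : V} (hle : G' ≤ G)
    (hadj : G.Adj z z') (hsep : G'.Separates A B S) (hz : z ∉ G'.reachAvoiding S B)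
    (hz' : z' ∉ G'.reachAvoiding S A) (hzS : z ∉ S) (hz'S : z' ∉ S)
    (hcard : (insert z S).card ≤ k)
    (hP : G'.HasDisjointWalks A ↑(insert z S) k) (hQ : G'.HasDisjointWalks ↑(insert z' S) B k) :
    G.HasDisjointWalks A B k := by
  obtain ⟨a, t, P, ha, ht, hPd, hPR⟩ := hP.exists_trimmed
  obtain ⟨b, s, Q, hb, hs, hQd, hQR⟩ := hQ.symm.exists_trimmed
  simp only [Finset.coe_insert] at ht hs hPR hQR
  have hs_inj := injective_of_pairwise_disjoint_support hQd
  -- `Equiv.swap z z'` matches `insert z' S` with `insert z S`, fixing `S`.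
  have hswap : ∀ v ∈ S, Equiv.swap z z' v = v := fun v hv =>
    Equiv.swap_apply_of_ne_of_ne (fun h => hzS (h ▸ hv)) (fun h => hz'S (h ▸ hv))
  obtain ⟨σ, hσ⟩ := exists_comp_eq_of_injective (injective_of_pairwise_disjoint_support hPd)
    (by simpa using ht) hcard (f := fun j => Equiv.swap z z' (s j)) fun j => by
      rcases hs j with h | h
      · simp [h]
      · rw [hswap _ h]; exact Finset.mem_insert_of_mem h
  refine hasDisjointWalks_of_forall_eq_or_adj (fun i => (P i).mapLe hle)
    (fun j => (Q j).reverse.mapLe hle) ha hb (σ := σ)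
    (by simpa [Walk.support_mapLe_eq_support] using hPd)
    (by simpa [Walk.support_mapLe_eq_support] using hQd)
    (fun j j' h => hs_inj (by simpa [hσ] using congrArg t h)) (fun j => ?_) ?_
  · rw [hσ]
    rcases hs j with h | h
    · simpa [h] using Or.inr hadj
    · exact Or.inl (hswap _ h)
  intro j j' v hvP hvQ
  simp only [Walk.support_mapLe_eq_support, Walk.support_reverse, List.mem_reverse] at hvP hvQ
  obtain ⟨rfl, hvs, hvS⟩ := hsep.mem_of_mem_of_mem hadj.ne hz hz' (ht (σ j)) (hs j')
    (fun h => reachAvoiding_mono (Set.subset_insert _ _) subset_rfl (hPR _ _ hvP h))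
    (fun h => reachAvoiding_mono (Set.subset_insert _ _) subset_rfl (hQR _ _ hvQ h))
  exact hs_inj (by rw [← (Equiv.swap z z').injective.eq_iff, ← hvs, hswap _ hvS, ← hσ])

theorem hasDisjointWalks_of_forall_le_card [Finite V] (A B : Set V) (k : ℕ)
    (h : ∀ S : Finset V, G.Separates A B S → k ≤ S.card) : G.HasDisjointWalks A B k := by
  classical
  induction hn : G.edgeSet.ncard using Nat.strong_induction_on generalizing G A B with
  | _ n ih =>
  rcases G.edgeSet.eq_empty_or_nonempty with hE | ⟨e, he⟩
  · obtain rfl := edgeSet_eq_empty.mp hE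
    exact hasDisjointWalks_bot h
  induction e using Sym2.ind with | _ x y => ?_
  set G' := G.deleteEdges {s(x, y)}
  have hlt : G'.edgeSet.ncard < n := by
    rw [edgeSet_deleteEdges, ← hn]
    exact Set.ncard_sdiff_singleton_lt_of_mem he
  by_cases hG' : ∀ S : Finset V, G'.Separates A B S → k ≤ S.card
  · exact (ih _ hlt A B hG' rfl).mono (deleteEdges_le _)
  push Not at hG'
  obtain ⟨S, hS, hSk⟩ := hG'
  obtain ⟨z, z', hzz', hz', hz⟩ := hS.exists_orientation fun hG => (h S hG).not_gt hSk
  have hP : ∀ T : Finset V, G'.Separates A ↑(insert z S) T → k ≤ T.card :=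
    fun T hT => h T (hS.of_deleteEdges_insert hzz' hz' (by simpa using hT))
  have hQ : ∀ T : Finset V, G'.Separates ↑(insert z' S) B T → k ≤ T.card := fun T hT =>
    h T (hS.symm.of_deleteEdges_insert (Sym2.eq_swap.trans hzz') hz (by simpa using hT.symm)).symm
  have hkz : k ≤ (insert z S).card := hP _ fun _ b _ hb w => ⟨b, w.end_mem_support, hb⟩
  have hkz' : k ≤ (insert z' S).card := hQ _ fun a _ ha _ w => ⟨a, w.start_mem_support, ha⟩
  have hzS : z ∉ S := fun hzS => by rw [Finset.insert_eq_of_mem hzS] at hkz; omega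
  have hz'S : z' ∉ S := fun hz'S => by rw [Finset.insert_eq_of_mem hz'S] at hkz'; omega
  exact (ih _ hlt A _ hP rfl).join (deleteEdges_le _) (by rwa [← mem_edgeSet, hzz']) hS hz hz'
    hzS hz'S ((Finset.card_insert_le _ _).trans hSk) (ih _ hlt _ B hQ rfl)

section separator

variable {a b : V}

lemma Separates.of_neighborSet [DecidableEq V] (hab : a ≠ b) (hadj : ¬ G.Adj a b) {T : Finset V}
    (hT : G.Separates (G.neighborSet a) (G.neighborSet b) T) :
    G.Separates {a} {b} ↑((T.erase a).erase b) := by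
  set Y : Set V := insert a (insert b T)
  have hY : ∀ v, v ∉ ((T.erase a).erase b : Finset V) → v ≠ a → v ≠ b → v ∉ Y := by
    intro v hv hva hvb hvY
    simp_all [Y]
  rw [separates_iff_disjoint_reachAvoiding] at hT ⊢
  refine Set.disjoint_singleton_right.mpr fun hb => ?_
  have hR := reachAvoiding_subset (G := G) (S := ((T.erase a).erase b : Finset V))
    (A := {a}) (R := insert a (G.reachAvoiding Y (G.neighborSet a)))
    (fun u hu _ => Or.inl hu) ?_ hb
  · rcases hR with hba | hb'
    exacts [hab hba.symm, notMem_of_mem_reachAvoiding hb' (by simp [Y])]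
  rintro u v (rfl | hu) huv hv
  · exact Or.inr (mem_reachAvoiding_of_mem huv (hY v hv huv.ne.symm fun h => hadj (h ▸ huv)))
  by_cases hva : v = a
  · exact Or.inl hva
  by_cases hvb : v = b
  · subst hvb
    have hYT : (T : Set V) ⊆ Y := (Set.subset_insert _ _).trans (Set.subset_insert _ _)
    exact (Set.disjoint_left.mp hT (reachAvoiding_mono hYT subset_rfl hu) huv.symm).elim
  · exact Or.inr (mem_reachAvoiding_of_adj hu huv (hY v hv hva hvb))

lemma HasDisjointWalks.hasDisjointPaths [DecidableEq V]
    (h : G.HasDisjointWalks (G.neighborSet a) (G.neighborSet b) k) : HasDisjointPaths G a b k := by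
  obtain ⟨p, q, W, hp, hq, hW⟩ := h
  have hp' : ∀ i, G.Adj a (p i) := hp
  have hq' : ∀ i, G.Adj (q i) b := fun i => (hq i).symm
  let P i : G.Walk a b := (Walk.cons (hp' i) ((W i).concat (hq' i))).bypass
  have hP : ∀ i v, v ∈ (P i).support → v = a ∨ v = b ∨ v ∈ (W i).support := fun i v hv => by
    have := Walk.support_bypass_subset_support _ hv
    simp only [Walk.support_cons, Walk.support_concat, List.mem_cons, List.mem_append] at this
    tauto
  refine ⟨P, fun i => Walk.bypass_isPath _, fun i j hij v hvi hvj => ?_⟩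
  rcases hP i v hvi with h | h | hi
  · exact Or.inl h
  · exact Or.inr h
  rcases hP j v hvj with h | h | hj
  · exact Or.inl h
  · exact Or.inr h
  · exact (hW hij hi hj).elim

theorem exists_separator_of_not_hasDisjointPaths [Finite V] (hab : a ≠ b) (hadj : ¬ G.Adj a b)
    {n : ℕ} (h : ¬ HasDisjointPaths G a b (n + 1)) :
    ∃ S : Finset V, S.card ≤ n ∧ a ∉ S ∧ b ∉ S ∧ G.Separates {a} {b} S := by
  classical
  by_contra! hS
  refine h (hasDisjointWalks_of_forall_le_card _ _ _ fun T hT => ?_).hasDisjointPaths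
  by_contra! hT'
  refine hS ((T.erase a).erase b) ?_ (by simp) (by simp) (hT.of_neighborSet hab hadj)
  exact (Finset.card_erase_le.trans Finset.card_erase_le).trans (Nat.lt_succ_iff.mp hT')

end separator

lemma le_card_of_internallyDisjoint {u v : V} {m : ℕ} {S : Finset V} {P : Fin m → G.Walk u v}
    (hP : Pairwise fun i j => InternallyDisjoint (P i) (P j)) (hu : u ∉ S) (hv : v ∉ S)
    (hS : ∀ i, ∃ s ∈ (P i).support, s ∈ S) : m ≤ S.card := by
  choose f hfP hfS using hS
  have hf : Function.Injective f := fun i j hij => by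
    by_contra hne
    rcases hP hne (f i) (hfP i) (hij ▸ hfP j) with h | h
    exacts [hu (h ▸ hfS i), hv (h ▸ hfS i)]
  simpa using Finset.card_le_card_of_injOn f (s := Finset.univ) (fun i _ => hfS i) hf.injOn

lemma exists_walk_avoiding_of_hasDisjointPaths {u v : V} {S : Finset V}
    (h : HasDisjointPaths G u v k) (hS : S.card < k) (hu : u ∉ S) (hv : v ∉ S) :
    ∃ p : G.Walk u v, ∀ x ∈ p.support, x ∉ S := by
  obtain ⟨P, -, hP⟩ := h
  by_contra! hall
  exact (le_card_of_internallyDisjoint hP hu hv fun i => hall (P i)).not_gt hS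

theorem _root_.HasDisjointPaths.mono {u v : V} (h : HasDisjointPaths G' u v k) (hle : G' ≤ G) :
    HasDisjointPaths G u v k := by
  obtain ⟨P, hP, hD⟩ := h
  refine ⟨fun i => (P i).mapLe hle, fun i => (hP i).mapLe hle, fun i j hij x hx hy => ?_⟩
  rw [Walk.support_mapLe_eq_support] at hx hy
  exact hD hij x hx hy

end SimpleGraph

theorem stmt_12_general {V : Type*} [Fintype V] (H : SimpleGraph V)
    (k r : ℕ) (hr : r + 1 ≤ k)
    (v₁ v₂ : V) (hne : v₁ ≠ v₂) (hadj : ¬ H.Adj v₁ v₂)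
    (hmax₁ : HasDisjointPaths H v₁ v₂ r)
    (hmax₂ : ¬ HasDisjointPaths H v₁ v₂ (r + 1))
    (F : Set (Sym2 V))
    (hF : ∀ e ∈ F, ∀ u w : V, e = s(u, w) → HasDisjointPaths H u w k) :
    HasDisjointPaths (SimpleGraph.fromEdgeSet (H.edgeSet ∪ F)) v₁ v₂ r ∧
    ¬ HasDisjointPaths (SimpleGraph.fromEdgeSet (H.edgeSet ∪ F)) v₁ v₂ (r + 1) := by
  have hle : H ≤ SimpleGraph.fromEdgeSet (H.edgeSet ∪ F) := fun u w huw =>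
    (SimpleGraph.fromEdgeSet_adj _).mpr ⟨Or.inl huw, huw.ne⟩
  refine ⟨hmax₁.mono hle, fun ⟨P, _, hP⟩ => ?_⟩
  obtain ⟨S, hSr, hv₁, hv₂, hsep⟩ :=
    SimpleGraph.exists_separator_of_not_hasDisjointPaths hne hadj hmax₂
  have hsep' : (SimpleGraph.fromEdgeSet (H.edgeSet ∪ F)).Separates {v₁} {v₂} S := by
    refine hsep.of_forall_adj fun u w huw hu hw => ?_
    obtain ⟨hH | hF', -⟩ := (SimpleGraph.fromEdgeSet_adj _).mp huw
    · exact ⟨(H.mem_edgeSet.mp hH).toWalk, by simpa using And.intro hu hw⟩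
    · exact SimpleGraph.exists_walk_avoiding_of_hasDisjointPaths (hF _ hF' u w rfl) (by omega) hu hw
  have := SimpleGraph.le_card_of_internallyDisjoint hP hv₁ hv₂ fun i => hsep' rfl rfl (P i)
  omega

/-- adding to `H` any set `F` of pairs whose endpoints are
`k`-connected in `H` does not change the maximum number `r ≤ k - 1` of internally
vertex-disjoint paths between two non-adjacent vertices `v₁, v₂`. -/
theorem stmt_12 {V : Type*} [Fintype V] [DecidableEq V] (H : SimpleGraph V)
    (k r : ℕ) (hk : 1 ≤ k) (hr : r + 1 ≤ k)
    (v₁ v₂ : V) (hne : v₁ ≠ v₂) (hadj : ¬ H.Adj v₁ v₂)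
    (hmax₁ : HasDisjointPaths H v₁ v₂ r)
    (hmax₂ : ¬ HasDisjointPaths H v₁ v₂ (r + 1))
    (F : Set (Sym2 V))
    (hF : ∀ e ∈ F, ∀ u w : V, e = s(u, w) → HasDisjointPaths H u w k) :
    HasDisjointPaths (SimpleGraph.fromEdgeSet (H.edgeSet ∪ F)) v₁ v₂ r ∧
    ¬ HasDisjointPaths (SimpleGraph.fromEdgeSet (H.edgeSet ∪ F)) v₁ v₂ (r + 1) :=
  stmt_12_general H k r hr v₁ v₂ hne hadj hmax₁ hmax₂ F hF
end
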